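/- Let k ≥ 2 and let −π/2 ≤ θ_1 < θ_2 < ⋯ < θ_k ≤ π/2 with θ_min = min_{p≠j} |θ_p − θ_j|. Then for every j = 1, …, k, Π_{1 ≤ p ≤ k, p ≠ j} |e^{i θ_j} − e^{i θ_p}| ≥ ζ(k) · (2 θ_min / π)^{k−1}. -/

import Mathlib

/-- `ζ(k) = (((k−1)/2)!)²` for odd `k`, and `ζ(k) = (k/2)!((k−2)/2)!` for even `k`. -/
noncomputable def zeta (k : ℕ) : ℝ :=
  if k % 2 = 1 then ((((k - 1) / 2).factorial : ℝ)) ^ 2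
  else ((k / 2).factorial : ℝ) * (((k - 2) / 2).factorial : ℝ)

/-! Each chord satisfies `|e^{ia} - e^{ib}| = 2|sin((a - b)/2)| ≥ (2/π)|a - b|` by Jordan's
inequality, since all angles lie in an interval of length `π`. Ordered angles with minimal gap
`θmin` satisfy `|θ_j - θ_p| ≥ |j - p| θmin`, so the product is at least
`(2 θmin/π)^{k-1} ∏_{p ≠ j} |j - p| = (2 θmin/π)^{k-1} j! (k-1-j)!`, and `j! (k-1-j)!` is smallest
for `j` in the middle (the central binomial coefficient is the largest), where it equals `ζ(k)`. -/

open Finset Complex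
open scoped Nat

lemma two_div_pi_mul_abs_sub_le_norm_exp_sub_exp {a b : ℝ} (h : |a - b| ≤ Real.pi) :
    2 / Real.pi * |a - b| ≤ ‖exp (I * a) - exp (I * b)‖ := by
  have hfactor : exp (I * a) - exp (I * b) = exp (I * b) * (exp (I * (a - b : ℝ)) - 1) := by
    rw [mul_sub, ← exp_add]; push_cast; ring_nf
  have hjordan := Real.mul_abs_le_abs_sin (x := (a - b) / 2)
    (by rw [abs_div, abs_two]; linarith)
  rw [hfactor, norm_mul, norm_exp_I_mul_ofReal, one_mul, norm_exp_I_mul_ofReal_sub_one,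
    norm_mul, Real.norm_eq_abs, Real.norm_eq_abs, abs_two]
  rw [abs_div, abs_two] at hjordan
  linarith

lemma Finset.prod_range_erase_dist {n j : ℕ} (hj : j < n) :
    ∏ i ∈ (range n).erase j, Nat.dist i j = j ! * (n - 1 - j)! := by
  have hsplit : (range n).erase j = range j ∪ Ico (j + 1) n := by
    ext i; simp only [mem_erase, mem_range, mem_union, mem_Ico]; omega
  rw [hsplit, prod_union (disjoint_left.2 fun i hi hi' => by simp at hi hi'; omega)]
  congr 1
  · rw [← prod_range_add_one_eq_factorial, ← prod_range_reflect]
    refine prod_congr rfl fun i hi => ?_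
    simp only [mem_range] at hi
    simp only [Nat.dist]; omega
  · rw [prod_Ico_eq_prod_range, ← prod_range_add_one_eq_factorial,
      show n - (j + 1) = n - 1 - j by omega]
    refine prod_congr rfl fun i _ => ?_
    simp only [Nat.dist]; omega

lemma Fin.prod_univ_erase_dist {n : ℕ} (j : Fin n) :
    ∏ p ∈ univ.erase j, Nat.dist p j = (j : ℕ)! * (n - 1 - j)! := by
  rw [← prod_range_erase_dist j.isLt, ← Nat.Iio_eq_range, ← Fin.map_valEmbedding_univ,
    ← Fin.valEmbedding_apply, ← map_erase, prod_map]

lemma Nat.factorial_half_mul_factorial_le {n a : ℕ} (h : a ≤ n) :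
    (n / 2)! * (n - n / 2)! ≤ a ! * (n - a)! := by
  have hmid := Nat.choose_mul_factorial_mul_factorial (Nat.div_le_self n 2)
  refine Nat.le_of_mul_le_mul_left ?_ (Nat.choose_pos (Nat.div_le_self n 2))
  calc n.choose (n / 2) * ((n / 2)! * (n - n / 2)!) = n.choose a * (a ! * (n - a)!) := by
        rw [← mul_assoc, hmid, ← mul_assoc, Nat.choose_mul_factorial_mul_factorial h]
    _ ≤ n.choose (n / 2) * (a ! * (n - a)!) := Nat.mul_le_mul_right _ (Nat.choose_le_middle a n)

lemma zeta_eq_factorial_mul_factorial (k : ℕ) :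
    zeta k = (((k - 1) / 2)! * (k - 1 - (k - 1) / 2)! : ℕ) := by
  unfold zeta
  split_ifs with hodd
  · rw [show k - 1 - (k - 1) / 2 = (k - 1) / 2 by omega]; push_cast; ring
  · rw [show (k - 1) / 2 = (k - 2) / 2 by omega, show k - 1 - (k - 2) / 2 = k / 2 by omega]
    push_cast; ring

lemma zeta_le_factorial_mul_factorial {k j : ℕ} (hj : j < k) :
    zeta k ≤ (j ! * (k - 1 - j)! : ℕ) := by
  rw [zeta_eq_factorial_mul_factorial]
  exact_mod_cast Nat.factorial_half_mul_factorial_le (by omega)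

section Separation

variable {n : ℕ} {θ : Fin n → ℝ} {δ : ℝ}

lemma mul_le_sub_of_forall_lt_le_sub (hδ : ∀ p q, p < q → δ ≤ θ q - θ p) {a b : Fin n}
    (hab : a ≤ b) : ((b - a : ℕ) : ℝ) * δ ≤ θ b - θ a := by
  obtain ⟨d, hd⟩ := Nat.exists_eq_add_of_le (Fin.le_def.1 hab)
  induction d generalizing b with
  | zero => simp [Fin.ext hd.symm]
  | succ d ih =>
    let c : Fin n := ⟨a + d, by omega⟩
    have hc := ih (b := c) (Fin.le_def.2 (by simp [c])) rfl
    have hcb := hδ c b (Fin.lt_def.2 (by simp [c]; omega))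
    simp only [c, Nat.add_sub_cancel_left] at hc
    rw [hd, Nat.add_sub_cancel_left]
    push_cast
    linarith

lemma dist_mul_le_abs_sub_of_forall_lt_le_sub (hδ : ∀ p q, p < q → δ ≤ θ q - θ p)
    (p q : Fin n) : (Nat.dist p q : ℝ) * δ ≤ |θ p - θ q| := by
  wlog hpq : p ≤ q generalizing p q
  · rw [Nat.dist_comm, abs_sub_comm]; exact this q p (le_of_not_ge hpq)
  rw [Nat.dist_eq_sub_of_le (Fin.le_def.1 hpq), abs_sub_comm]
  exact (mul_le_sub_of_forall_lt_le_sub hδ hpq).trans (le_abs_self _)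

end Separation

theorem prod_exp_diff_lower_bound
    (k : ℕ) (θ : Fin k → ℝ) (hmono : StrictMono θ)
    (hrange : ∀ i, θ i ∈ Set.Icc (-(Real.pi / 2)) (Real.pi / 2))
    (θmin : ℝ)
    (hθmin : IsLeast {d : ℝ | ∃ p j : Fin k, p ≠ j ∧ d = |θ p - θ j|} θmin) :
    ∀ j : Fin k,
      zeta k * (2 * θmin / Real.pi) ^ (k - 1) ≤
        ∏ p ∈ Finset.univ.erase j,
          ‖(Complex.exp (Complex.I * (θ j : ℂ))
            - Complex.exp (Complex.I * (θ p : ℂ)))‖ := by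
  intro j
  obtain ⟨⟨p₀, q₀, -, hθmin_eq⟩, hleast⟩ := hθmin
  have hscale : 0 ≤ 2 * θmin / Real.pi :=
    div_nonneg (by linarith [hθmin_eq ▸ abs_nonneg (θ p₀ - θ q₀)]) Real.pi_pos.le
  have hgap : ∀ p q, p < q → θmin ≤ θ q - θ p := fun p q hpq =>
    (hleast ⟨q, p, hpq.ne', rfl⟩).trans_eq (abs_of_pos (sub_pos.2 (hmono hpq)))
  have hfactor : ∀ p ∈ univ.erase j, 2 * θmin / Real.pi * (Nat.dist p j : ℝ) ≤
      ‖exp (I * (θ j : ℂ)) - exp (I * (θ p : ℂ))‖ := by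
    intro p _
    have hdiam : |θ j - θ p| ≤ Real.pi := by
      obtain ⟨hj₁, hj₂⟩ := hrange j
      obtain ⟨hp₁, hp₂⟩ := hrange p
      rw [abs_le]; constructor <;> linarith
    calc 2 * θmin / Real.pi * (Nat.dist p j : ℝ)
        = 2 / Real.pi * ((Nat.dist j p : ℝ) * θmin) := by rw [Nat.dist_comm]; ring
      _ ≤ 2 / Real.pi * |θ j - θ p| := by
        gcongr; exact dist_mul_le_abs_sub_of_forall_lt_le_sub hgap j p
      _ ≤ _ := two_div_pi_mul_abs_sub_le_norm_exp_sub_exp hdiam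
  calc zeta k * (2 * θmin / Real.pi) ^ (k - 1)
      ≤ ((j ! * (k - 1 - j)! : ℕ) : ℝ) * (2 * θmin / Real.pi) ^ (k - 1) := by
        gcongr; exact zeta_le_factorial_mul_factorial j.isLt
    _ = ∏ p ∈ univ.erase j, 2 * θmin / Real.pi * (Nat.dist p j : ℝ) := by
        rw [prod_mul_distrib, prod_const, card_erase_of_mem (mem_univ j), card_univ,
          Fintype.card_fin, ← Fin.prod_univ_erase_dist j]
        push_cast; ring
    _ ≤ _ := prod_le_prod (fun _ _ => mul_nonneg hscale (Nat.cast_nonneg _)) hfactor
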